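/- Let G* : U → Y and G : U → Y be Lipschitz maps between Hilbert spaces, Q a probability measure over probability measures on U with finite second moments, and E_Q(G) := E_{ν'∼Q} E_{u'∼ν'} ‖G*(u') − G(u')‖²_Y. Then for any probability measure μ on U with finite second moment, E_Q(G) ≤ E_{u∼μ}‖G*(u) − G(u)‖²_Y + √(E_{ν'∼Q} c²(G*, G, μ, ν')) · √(E_{ν'∼Q} W2²(μ, ν')), where c(G1, G2, μ, μ') = (Lip(G1)+Lip(G2))·√(4(Lip(G1)+Lip(G2))²(m₂(μ)+m₂(μ')) + 16(‖G1(0)‖² + ‖G2(0)‖²)). -/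

import Mathlib

/-!
Put `F = G* − G`, a `(Lip G* + Lip G)`-Lipschitz map. Since
`‖F v‖² − ‖F u‖² ≤ Lip F · ‖u − v‖ · (‖F u‖ + ‖F v‖)`, integrating against any coupling `γ` of
`μ` and `ν` and applying Cauchy–Schwarz in `L²(γ)` bounds `E_ν‖F‖² − E_μ‖F‖²` by `Lip F` times
`(E_γ (‖F u‖ + ‖F v‖)²)^{1/2}` times the square root of the transport cost of `γ`. The linear
growth of `F` controls the middle factor by the second moments of `μ` and `ν`, and taking the
infimum over couplings gives `E_ν‖F‖² ≤ E_μ‖F‖² + c(μ, ν) W₂(μ, ν)`. Averaging over `ν ∼ Q` and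
applying Cauchy–Schwarz in `L²(Q)` gives the theorem.
-/

open MeasureTheory

/-- The 2-Wasserstein distance, defined as the square root of the infimum of
`∫ d(x,y)² dγ` over couplings of `μ` and `ν`. -/
noncomputable def wasserstein2 {X : Type*} [MeasurableSpace X] [PseudoEMetricSpace X]
    (μ ν : Measure X) : ℝ :=
  Real.sqrt
    (⨅ γ ∈ {γ : Measure (X × X) |
        γ.map Prod.fst = μ ∧ γ.map Prod.snd = ν},
      ∫⁻ z, edist z.1 z.2 ^ 2 ∂γ).toReal

open Filter

section CauchySchwarz

variable {α : Type*} [MeasurableSpace α] {μ : Measure α} {f g : α → ℝ}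

theorem integral_mul_le_sqrt_mul_sqrt_of_nonneg (hf0 : 0 ≤ᵐ[μ] f) (hg0 : 0 ≤ᵐ[μ] g)
    (hf : MemLp f 2 μ) (hg : MemLp g 2 μ) :
    ∫ a, f a * g a ∂μ ≤ √(∫ a, f a ^ 2 ∂μ) * √(∫ a, g a ^ 2 ∂μ) := by
  have h := integral_mul_le_Lp_mul_Lq_of_nonneg Real.HolderConjugate.two_two hf0 hg0
    (by simpa using hf) (by simpa using hg)
  simpa [Real.sqrt_eq_rpow] using h

theorem memLp_two_of_integrable_sq_of_nonneg (hf0 : 0 ≤ f)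
    (hf : Integrable (fun a => f a ^ 2) μ) : MemLp f 2 μ := by
  have hf_eq : f = fun a => √(f a ^ 2) := funext fun a => (Real.sqrt_sq (hf0 a)).symm
  have hmeas : AEStronglyMeasurable f μ := by
    rw [hf_eq]
    exact hf.aestronglyMeasurable.aemeasurable.sqrt.aestronglyMeasurable
  exact (memLp_two_iff_integrable_sq hmeas).2 hf

theorem integral_le_add_sqrt_mul_sqrt_of_ae_le [IsProbabilityMeasure μ] {h : α → ℝ} {a : ℝ}
    (hh : Integrable h μ) (hf0 : 0 ≤ f) (hg0 : 0 ≤ g) (hf : Integrable (fun x => f x ^ 2) μ)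
    (hg : Integrable (fun x => g x ^ 2) μ) (hle : ∀ᵐ x ∂μ, h x ≤ a + f x * g x) :
    ∫ x, h x ∂μ ≤ a + √(∫ x, f x ^ 2 ∂μ) * √(∫ x, g x ^ 2 ∂μ) := by
  have hf2 := memLp_two_of_integrable_sq_of_nonneg hf0 hf
  have hg2 := memLp_two_of_integrable_sq_of_nonneg hg0 hg
  have hfg : Integrable (fun x => f x * g x) μ := hf2.integrable_mul hg2
  calc ∫ x, h x ∂μ ≤ ∫ x, (a + f x * g x) ∂μ :=
        integral_mono_ae hh ((integrable_const a).add hfg) hle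
    _ = a + ∫ x, f x * g x ∂μ := by rw [integral_add (integrable_const a) hfg]; simp
    _ ≤ _ := by
      gcongr
      exact integral_mul_le_sqrt_mul_sqrt_of_nonneg (.of_forall hf0) (.of_forall hg0) hf2 hg2

end CauchySchwarz

namespace LipschitzWith

variable {U Y : Type*} [SeminormedAddCommGroup U] [SeminormedAddCommGroup Y] {K : NNReal}
  {F : U → Y}

theorem sq_norm_le (hF : LipschitzWith K F) (u : U) :
    ‖F u‖ ^ 2 ≤ 2 * K ^ 2 * ‖u‖ ^ 2 + 2 * ‖F 0‖ ^ 2 := by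
  have h : ‖F u‖ ≤ K * ‖u‖ + ‖F 0‖ := by
    have hlip := hF.dist_le_mul u 0
    rw [dist_eq_norm, dist_zero_right] at hlip
    linarith [norm_sub_norm_le (F u) (F 0)]
  calc ‖F u‖ ^ 2 ≤ (K * ‖u‖ + ‖F 0‖) ^ 2 := by gcongr
    _ ≤ 2 * ((K * ‖u‖) ^ 2 + ‖F 0‖ ^ 2) := add_sq_le
    _ = _ := by ring

theorem sq_norm_sub_sq_norm_le (hF : LipschitzWith K F) (u v : U) :
    ‖F v‖ ^ 2 - ‖F u‖ ^ 2 ≤ K * (‖u - v‖ * (‖F u‖ + ‖F v‖)) := by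
  have h : ‖F v‖ - ‖F u‖ ≤ K * ‖u - v‖ := by
    have hlip := hF.dist_le_mul v u
    rw [dist_eq_norm, dist_eq_norm, norm_sub_rev v u] at hlip
    linarith [norm_sub_norm_le (F v) (F u)]
  calc ‖F v‖ ^ 2 - ‖F u‖ ^ 2 = (‖F v‖ - ‖F u‖) * (‖F u‖ + ‖F v‖) := by ring
    _ ≤ K * ‖u - v‖ * (‖F u‖ + ‖F v‖) := by gcongr
    _ = _ := mul_assoc _ _ _

variable [MeasurableSpace U] [OpensMeasurableSpace U] {μ : Measure U}

theorem integrable_sq_norm [IsFiniteMeasure μ] (hF : LipschitzWith K F)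
    (hμ : Integrable (fun u => ‖u‖ ^ 2) μ) : Integrable (fun u => ‖F u‖ ^ 2) μ :=
  ((hμ.const_mul _).add (integrable_const _)).mono'
    (hF.continuous.norm.pow 2).aestronglyMeasurable
    (.of_forall fun u => by rw [Real.norm_of_nonneg (by positivity)]; exact hF.sq_norm_le u)

theorem integral_sq_norm_le [IsProbabilityMeasure μ] (hF : LipschitzWith K F)
    (hμ : Integrable (fun u => ‖u‖ ^ 2) μ) :
    ∫ u, ‖F u‖ ^ 2 ∂μ ≤ 2 * K ^ 2 * ∫ u, ‖u‖ ^ 2 ∂μ + 2 * ‖F 0‖ ^ 2 := by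
  have hbound := (hμ.const_mul (2 * (K : ℝ) ^ 2)).add (integrable_const (2 * ‖F 0‖ ^ 2))
  calc ∫ u, ‖F u‖ ^ 2 ∂μ ≤ ∫ u, (2 * K ^ 2 * ‖u‖ ^ 2 + 2 * ‖F 0‖ ^ 2) ∂μ :=
        integral_mono (hF.integrable_sq_norm hμ) hbound hF.sq_norm_le
    _ = _ := by
      rw [integral_add (hμ.const_mul _) (integrable_const _), integral_const_mul]
      simp

end LipschitzWith

theorem le_mul_sqrt_toReal_biInf_ofReal {ι : Type*} {S : Set ι} {f : ι → ℝ} {x K : ℝ}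
    (hS : S.Nonempty) (hK : 0 ≤ K) (h : ∀ i ∈ S, x ≤ K * √(f i)) :
    x ≤ K * √(⨅ i ∈ S, ENNReal.ofReal (f i)).toReal := by
  obtain ⟨i₀, hi₀⟩ := hS
  rcases le_or_gt x 0 with hx | hx
  · exact hx.trans (by positivity)
  have hKpos : 0 < K := by
    refine hK.lt_of_ne fun hK0 => ?_
    have := h i₀ hi₀
    rw [← hK0, zero_mul] at this
    linarith
  have hsq : ∀ i ∈ S, ENNReal.ofReal ((x / K) ^ 2) ≤ ENNReal.ofReal (f i) := fun i hi =>
    ENNReal.ofReal_le_ofReal <| (Real.le_sqrt' (by positivity)).1 <|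
      (div_le_iff₀' hKpos).2 (h i hi)
  have hfin : (⨅ i ∈ S, ENNReal.ofReal (f i)) ≠ ⊤ :=
    ne_top_of_le_ne_top ENNReal.ofReal_ne_top (iInf₂_le i₀ hi₀)
  have hinf := ENNReal.toReal_mono hfin (le_iInf₂ hsq)
  rw [ENNReal.toReal_ofReal (sq_nonneg _)] at hinf
  rw [← div_le_iff₀' hKpos]
  exact (Real.le_sqrt' (by positivity)).2 hinf

theorem lintegral_edist_sq_eq_ofReal_integral {U : Type*} [SeminormedAddCommGroup U]
    [MeasurableSpace U] {γ : Measure (U × U)}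
    (h : Integrable (fun z : U × U => ‖z.1 - z.2‖ ^ 2) γ) :
    ∫⁻ z, edist z.1 z.2 ^ 2 ∂γ = ENNReal.ofReal (∫ z, ‖z.1 - z.2‖ ^ 2 ∂γ) := by
  rw [ofReal_integral_eq_lintegral_ofReal h (.of_forall fun _ => by positivity)]
  congr 1 with z
  rw [edist_eq_enorm_sub, ENNReal.ofReal_pow (norm_nonneg _), ofReal_norm]

section Coupling

variable {U : Type*} [NormedAddCommGroup U] [MeasurableSpace U] [OpensMeasurableSpace U]
  [SecondCountableTopology U] {μ ν : Measure U} {γ : Measure (U × U)}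

theorem memLp_norm_sub_of_map_fst_of_map_snd (hγ₁ : γ.map Prod.fst = μ)
    (hγ₂ : γ.map Prod.snd = ν) (hμ : Integrable (fun u => ‖u‖ ^ 2) μ)
    (hν : Integrable (fun u => ‖u‖ ^ 2) ν) :
    MemLp (fun z : U × U => ‖z.1 - z.2‖) 2 γ := by
  have hμ' : MemLp id 2 μ := (memLp_two_iff_integrable_sq_norm aestronglyMeasurable_id).2 hμ
  have hν' : MemLp id 2 ν := (memLp_two_iff_integrable_sq_norm aestronglyMeasurable_id).2 hν
  exact ((hμ'.comp_measurePreserving ⟨measurable_fst, hγ₁⟩).sub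
    (hν'.comp_measurePreserving ⟨measurable_snd, hγ₂⟩)).norm

theorem wasserstein2_eq_sqrt_iInf_integral (hμ : Integrable (fun u => ‖u‖ ^ 2) μ)
    (hν : Integrable (fun u => ‖u‖ ^ 2) ν) :
    wasserstein2 μ ν = √(⨅ γ ∈ {γ : Measure (U × U) | γ.map Prod.fst = μ ∧ γ.map Prod.snd = ν},
      ENNReal.ofReal (∫ z, ‖z.1 - z.2‖ ^ 2 ∂γ)).toReal := by
  unfold wasserstein2
  congr 2
  refine biInf_congr fun γ hγ => lintegral_edist_sq_eq_ofReal_integral ?_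
  exact (memLp_norm_sub_of_map_fst_of_map_snd hγ.1 hγ.2 hμ hν).integrable_sq

variable {Y : Type*} [SeminormedAddCommGroup Y] {K : NNReal} {F : U → Y}

theorem LipschitzWith.integral_sq_norm_le_of_coupling [IsProbabilityMeasure μ]
    [IsProbabilityMeasure ν] (hF : LipschitzWith K F) (hγ₁ : γ.map Prod.fst = μ)
    (hγ₂ : γ.map Prod.snd = ν) (hμ : Integrable (fun u => ‖u‖ ^ 2) μ)
    (hν : Integrable (fun u => ‖u‖ ^ 2) ν) :
    ∫ u, ‖F u‖ ^ 2 ∂ν ≤ ∫ u, ‖F u‖ ^ 2 ∂μ +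
      K * √(4 * K ^ 2 * (∫ u, ‖u‖ ^ 2 ∂μ + ∫ u, ‖u‖ ^ 2 ∂ν) + 8 * ‖F 0‖ ^ 2) *
        √(∫ z, ‖z.1 - z.2‖ ^ 2 ∂γ) := by
  have hFμ : MemLp (fun u => ‖F u‖) 2 μ :=
    memLp_two_of_integrable_sq_of_nonneg (fun _ => norm_nonneg _) (hF.integrable_sq_norm hμ)
  have hFν : MemLp (fun u => ‖F u‖) 2 ν :=
    memLp_two_of_integrable_sq_of_nonneg (fun _ => norm_nonneg _) (hF.integrable_sq_norm hν)
  have h₁ : MemLp (fun z : U × U => ‖F z.1‖) 2 γ :=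
    hFμ.comp_measurePreserving ⟨measurable_fst, hγ₁⟩
  have h₂ : MemLp (fun z : U × U => ‖F z.2‖) 2 γ :=
    hFν.comp_measurePreserving ⟨measurable_snd, hγ₂⟩
  have hs : MemLp (fun z : U × U => ‖F z.1‖ + ‖F z.2‖) 2 γ := h₁.add h₂
  have hd := memLp_norm_sub_of_map_fst_of_map_snd hγ₁ hγ₂ hμ hν
  have hFsq : Continuous fun u => ‖F u‖ ^ 2 := by have := hF.continuous; fun_prop
  have hint₁ : ∫ z, ‖F z.1‖ ^ 2 ∂γ = ∫ u, ‖F u‖ ^ 2 ∂μ := by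
    rw [← hγ₁, integral_map measurable_fst.aemeasurable hFsq.aestronglyMeasurable]
  have hint₂ : ∫ z, ‖F z.2‖ ^ 2 ∂γ = ∫ u, ‖F u‖ ^ 2 ∂ν := by
    rw [← hγ₂, integral_map measurable_snd.aemeasurable hFsq.aestronglyMeasurable]
  have hsum : ∫ z, (‖F z.1‖ + ‖F z.2‖) ^ 2 ∂γ ≤
      4 * K ^ 2 * (∫ u, ‖u‖ ^ 2 ∂μ + ∫ u, ‖u‖ ^ 2 ∂ν) + 8 * ‖F 0‖ ^ 2 :=
    calc ∫ z, (‖F z.1‖ + ‖F z.2‖) ^ 2 ∂γ ≤ ∫ z, 2 * (‖F z.1‖ ^ 2 + ‖F z.2‖ ^ 2) ∂γ :=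
          integral_mono hs.integrable_sq ((h₁.integrable_sq.add h₂.integrable_sq).const_mul 2)
            fun _ => add_sq_le
      _ = 2 * (∫ u, ‖F u‖ ^ 2 ∂μ + ∫ u, ‖F u‖ ^ 2 ∂ν) := by
          rw [integral_const_mul, integral_add h₁.integrable_sq h₂.integrable_sq, hint₁, hint₂]
      _ ≤ _ := by linarith [hF.integral_sq_norm_le hμ, hF.integral_sq_norm_le hν]
  have hprod : Integrable (fun z : U × U => ‖z.1 - z.2‖ * (‖F z.1‖ + ‖F z.2‖)) γ :=
    hd.integrable_mul hs
  calc ∫ u, ‖F u‖ ^ 2 ∂ν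
      = ∫ u, ‖F u‖ ^ 2 ∂μ + ∫ z, (‖F z.2‖ ^ 2 - ‖F z.1‖ ^ 2) ∂γ := by
        rw [integral_sub h₂.integrable_sq h₁.integrable_sq, hint₁, hint₂]; ring
    _ ≤ ∫ u, ‖F u‖ ^ 2 ∂μ + K * ∫ z, ‖z.1 - z.2‖ * (‖F z.1‖ + ‖F z.2‖) ∂γ := by
        rw [← integral_const_mul]
        exact (add_le_add_iff_left _).2 <| integral_mono
          (h₂.integrable_sq.sub h₁.integrable_sq) (hprod.const_mul _)
          fun z => hF.sq_norm_sub_sq_norm_le z.1 z.2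
    _ ≤ ∫ u, ‖F u‖ ^ 2 ∂μ + K * (√(∫ z, ‖z.1 - z.2‖ ^ 2 ∂γ) *
          √(∫ z, (‖F z.1‖ + ‖F z.2‖) ^ 2 ∂γ)) := by
        gcongr
        exact integral_mul_le_sqrt_mul_sqrt_of_nonneg (.of_forall fun _ => norm_nonneg _)
          (.of_forall fun _ => by positivity) hd hs
    _ ≤ _ := by
        rw [mul_comm (√(∫ z, ‖z.1 - z.2‖ ^ 2 ∂γ)), ← mul_assoc]
        gcongr

theorem LipschitzWith.integral_sq_norm_le_add_mul_wasserstein2 [IsProbabilityMeasure μ]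
    [IsProbabilityMeasure ν] (hF : LipschitzWith K F) (hμ : Integrable (fun u => ‖u‖ ^ 2) μ)
    (hν : Integrable (fun u => ‖u‖ ^ 2) ν) :
    ∫ u, ‖F u‖ ^ 2 ∂ν ≤ ∫ u, ‖F u‖ ^ 2 ∂μ +
      K * √(4 * K ^ 2 * (∫ u, ‖u‖ ^ 2 ∂μ + ∫ u, ‖u‖ ^ 2 ∂ν) + 8 * ‖F 0‖ ^ 2) *
        wasserstein2 μ ν := by
  have hprod : (μ.prod ν).map Prod.fst = μ ∧ (μ.prod ν).map Prod.snd = ν := by simp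
  rw [wasserstein2_eq_sqrt_iInf_integral hμ hν, ← sub_le_iff_le_add']
  exact le_mul_sqrt_toReal_biInf_ofReal ⟨μ.prod ν, hprod⟩ (by positivity) fun γ hγ =>
    sub_le_iff_le_add'.2 (hF.integral_sq_norm_le_of_coupling hγ.1 hγ.2 hμ hν)

end Coupling

theorem basic_inequality_average_general
    {U Y : Type*}
    [NormedAddCommGroup U]
    [SecondCountableTopology U] [MeasurableSpace U] [BorelSpace U]
    [NormedAddCommGroup Y]
    (Gstar G : U → Y) (K1 K2 : NNReal)
    (h1 : LipschitzWith K1 Gstar) (h2 : LipschitzWith K2 G)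
    (C : ℝ) (hC : C = (K1 : ℝ) + (K2 : ℝ))
    (c : Measure U → Measure U → ℝ)
    (hc : ∀ ρ ρ' : Measure U, c ρ ρ' =
      C * Real.sqrt (4 * C ^ 2 * ((∫ u, ‖u‖ ^ 2 ∂ρ) + ∫ u, ‖u‖ ^ 2 ∂ρ') +
        16 * (‖Gstar 0‖ ^ 2 + ‖G 0‖ ^ 2)))
    (Q : Measure (Measure U)) [IsProbabilityMeasure Q]
    (hQae : ∀ᵐ ν' ∂Q, IsProbabilityMeasure ν' ∧ Integrable (fun u => ‖u‖ ^ 2) ν')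
    (μ : Measure U) [IsProbabilityMeasure μ]
    (hμ2 : Integrable (fun u => ‖u‖ ^ 2) μ)
    (hi1 : Integrable (fun ν' : Measure U => ∫ u, ‖Gstar u - G u‖ ^ 2 ∂ν') Q)
    (hi2 : Integrable (fun ν' : Measure U => (c μ ν') ^ 2) Q)
    (hi3 : Integrable (fun ν' : Measure U => (wasserstein2 μ ν') ^ 2) Q) :
    ∫ ν', (∫ u, ‖Gstar u - G u‖ ^ 2 ∂ν') ∂Q ≤
      (∫ u, ‖Gstar u - G u‖ ^ 2 ∂μ) +
        Real.sqrt (∫ ν', (c μ ν') ^ 2 ∂Q) *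
          Real.sqrt (∫ ν', (wasserstein2 μ ν') ^ 2 ∂Q) := by
  have hC0 : 0 ≤ C := hC ▸ by positivity
  have hc0 : ∀ ν', 0 ≤ c μ ν' := fun ν' => (hc μ ν').symm ▸ by positivity
  have hF : LipschitzWith (K1 + K2) fun u => Gstar u - G u := h1.sub h2
  have hF0 : ‖Gstar 0 - G 0‖ ^ 2 ≤ 2 * (‖Gstar 0‖ ^ 2 + ‖G 0‖ ^ 2) :=
    (pow_le_pow_left₀ (norm_nonneg _) (norm_sub_le _ _) 2).trans add_sq_le
  refine integral_le_add_sqrt_mul_sqrt_of_ae_le hi1 hc0 (fun _ => Real.sqrt_nonneg _) hi2 hi3 ?_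
  filter_upwards [hQae] with ν' ⟨_, hν'2⟩
  refine (hF.integral_sq_norm_le_add_mul_wasserstein2 hμ2 hν'2).trans <|
    (add_le_add_iff_left _).2 (mul_le_mul_of_nonneg_right ?_ (Real.sqrt_nonneg _))
  rw [hc, hC]
  push_cast
  gcongr _ * √(_ + ?_)
  linarith

/-- basic inequality: for Lipschitz maps `G*, G` and a probability measure `Q`
over probability measures on `U` with finite second moments,
`E_Q(G) ≤ E_{u∼μ}‖G*(u) − G(u)‖² + √(E_{ν'∼Q} c²(G*,G,μ,ν')) · √(E_{ν'∼Q} W₂²(μ,ν'))`,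
where `c(G₁,G₂,μ,μ') = C·√(4C²(m₂(μ)+m₂(μ')) + 16(‖G₁0‖²+‖G₂0‖²))` with `C = Lip(G₁)+Lip(G₂)`. -/
theorem basic_inequality_average
    {U Y : Type*}
    [NormedAddCommGroup U] [InnerProductSpace ℝ U] [CompleteSpace U]
    [SecondCountableTopology U] [MeasurableSpace U] [BorelSpace U]
    [NormedAddCommGroup Y] [InnerProductSpace ℝ Y] [CompleteSpace Y]
    [SecondCountableTopology Y]
    (Gstar G : U → Y) (K1 K2 : NNReal)
    (h1 : LipschitzWith K1 Gstar) (h2 : LipschitzWith K2 G)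
    (C : ℝ) (hC : C = (K1 : ℝ) + (K2 : ℝ))
    (c : Measure U → Measure U → ℝ)
    (hc : ∀ ρ ρ' : Measure U, c ρ ρ' =
      C * Real.sqrt (4 * C ^ 2 * ((∫ u, ‖u‖ ^ 2 ∂ρ) + ∫ u, ‖u‖ ^ 2 ∂ρ') +
        16 * (‖Gstar 0‖ ^ 2 + ‖G 0‖ ^ 2)))
    (Q : Measure (Measure U)) [IsProbabilityMeasure Q]
    (hQae : ∀ᵐ ν' ∂Q, IsProbabilityMeasure ν' ∧ Integrable (fun u => ‖u‖ ^ 2) ν')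
    (μ : Measure U) [IsProbabilityMeasure μ]
    (hμ2 : Integrable (fun u => ‖u‖ ^ 2) μ)
    (hi1 : Integrable (fun ν' : Measure U => ∫ u, ‖Gstar u - G u‖ ^ 2 ∂ν') Q)
    (hi2 : Integrable (fun ν' : Measure U => (c μ ν') ^ 2) Q)
    (hi3 : Integrable (fun ν' : Measure U => (wasserstein2 μ ν') ^ 2) Q) :
    ∫ ν', (∫ u, ‖Gstar u - G u‖ ^ 2 ∂ν') ∂Q ≤
      (∫ u, ‖Gstar u - G u‖ ^ 2 ∂μ) +
        Real.sqrt (∫ ν', (c μ ν') ^ 2 ∂Q) *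
          Real.sqrt (∫ ν', (wasserstein2 μ ν') ^ 2 ∂Q) :=
  basic_inequality_average_general Gstar G K1 K2 h1 h2 C hC c hc Q hQae μ hμ2 hi1 hi2 hi3
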